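/- arXiv:1205.6166 — 3 statements merged into one kernel-verified Lean document; each statement's English description precedes it below -/
import Mathlib

section
/- Let G be a compact Hausdorff topological group with normalized Haar probability measure μ. For f : G → ℂ define (sub f)(g₁,g₂) = f(g₁g₂) on G×G. Then the following are equivalent: (i) for all continuous f, f' : G → ℂ and all (g₁,g₂) ∈ G×G, ((sub f) ⋆ (sub f'))(g₁,g₂) = (f ⋆ f')(g₁g₂), where the left convolution is taken on G×G; (ii) G is commutative. That is, the elementary move of subdividing an edge is cylindrically consistent for the convolution product if and only if G is abelian. -/
open MeasureTheory Set Filter Topology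

/-- On a product of compact Hausdorff spaces, every continuous real-valued function is
measurable with respect to the product σ-algebra, by Stone–Weierstrass. -/
lemma measurable_continuous_of_prod {X Y : Type*}
    [TopologicalSpace X] [CompactSpace X] [T2Space X] [MeasurableSpace X] [BorelSpace X]
    [TopologicalSpace Y] [CompactSpace Y] [T2Space Y] [MeasurableSpace Y] [BorelSpace Y]
    {f : X × Y → ℝ} (hf : Continuous f) : Measurable f := by
  let A : Subalgebra ℝ C(X × Y, ℝ) :=
    { carrier := {u : C(X × Y, ℝ) | Measurable (u : X × Y → ℝ)}
      mul_mem' := fun hu hv => hu.mul hv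
      add_mem' := fun hu hv => hu.add hv
      algebraMap_mem' := fun r => by
        show Measurable ⇑((algebraMap ℝ C(X × Y, ℝ)) r)
        have : ⇑((algebraMap ℝ C(X × Y, ℝ)) r) = fun _ => r := rfl
        rw [this]
        exact measurable_const }
  have hsep : A.SeparatesPoints := by
    rintro ⟨x₁, y₁⟩ ⟨x₂, y₂⟩ hne
    have : x₁ ≠ x₂ ∨ y₁ ≠ y₂ := by
      by_contra h
      push_neg at h
      exact hne (by rw [h.1, h.2])
    rcases this with hx | hy
    · obtain ⟨g, hg0, hg1, -⟩ := exists_continuous_zero_one_of_isClosed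
        (isClosed_singleton (x := x₁)) (isClosed_singleton (x := x₂))
        (by simpa using hx)
      refine ⟨g.comp ⟨Prod.fst, continuous_fst⟩,
        ⟨g.comp ⟨Prod.fst, continuous_fst⟩, ?_, rfl⟩, ?_⟩
      · exact g.continuous.measurable.comp measurable_fst
      · have h0 : g x₁ = 0 := hg0 rfl
        have h1 : g x₂ = 1 := hg1 rfl
        simp [ContinuousMap.comp_apply, h0, h1]
    · obtain ⟨g, hg0, hg1, -⟩ := exists_continuous_zero_one_of_isClosed
        (isClosed_singleton (x := y₁)) (isClosed_singleton (x := y₂))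
        (by simpa using hy)
      refine ⟨g.comp ⟨Prod.snd, continuous_snd⟩,
        ⟨g.comp ⟨Prod.snd, continuous_snd⟩, ?_, rfl⟩, ?_⟩
      · exact g.continuous.measurable.comp measurable_snd
      · have h0 : g y₁ = 0 := hg0 rfl
        have h1 : g y₂ = 1 := hg1 rfl
        simp [ContinuousMap.comp_apply, h0, h1]
  have hA : A.topologicalClosure = ⊤ :=
    ContinuousMap.subalgebra_topologicalClosure_eq_top_of_separatesPoints A hsep
  have hmem : (⟨f, hf⟩ : C(X × Y, ℝ)) ∈ closure (A : Set C(X × Y, ℝ)) := by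
    have : (⟨f, hf⟩ : C(X × Y, ℝ)) ∈ A.topologicalClosure := by
      rw [hA]; trivial
    exact this
  obtain ⟨u, huA, hu⟩ := mem_closure_iff_seq_limit.1 hmem
  have hpt : Tendsto (fun n => ((u n : C(X × Y, ℝ)) : X × Y → ℝ)) atTop (𝓝 f) := by
    rw [tendsto_pi_nhds]
    intro p
    exact ((continuous_eval_const p).tendsto _).comp hu
  exact measurable_of_tendsto_metrizable (fun n => huA n) hpt

lemma measurable_continuous_of_prod_complex {X Y : Type*}
    [TopologicalSpace X] [CompactSpace X] [T2Space X] [MeasurableSpace X] [BorelSpace X]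
    [TopologicalSpace Y] [CompactSpace Y] [T2Space Y] [MeasurableSpace Y] [BorelSpace Y]
    {f : X × Y → ℂ} (hf : Continuous f) : Measurable f := by
  have h1 : Measurable fun p => (f p).re :=
    measurable_continuous_of_prod (Complex.continuous_re.comp hf)
  have h2 : Measurable fun p => (f p).im :=
    measurable_continuous_of_prod (Complex.continuous_im.comp hf)
  have hrepr : f = fun p => (((f p).re : ℂ) + ((f p).im : ℂ) * Complex.I) := by
    funext p
    simp [Complex.re_add_im]
  rw [hrepr]
  exact (Complex.measurable_ofReal.comp h1).add
    ((Complex.measurable_ofReal.comp h2).mul_const _)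

/-- Convolution of two complex-valued functions on a group with respect to a measure:
`(f ⋆ f')(g) = ∫ f (g h⁻¹) f' (h) dμ(h)`. -/
noncomputable def convolution' {G : Type*} [Group G] [MeasurableSpace G]
    (μ : Measure G) (f f' : G → ℂ) : G → ℂ :=
  fun g => ∫ h, f (g * h⁻¹) * f' h ∂μ

/-- The elementary move of subdividing an edge, `(sub f)(g₁, g₂) = f (g₁ g₂)`, is
cylindrically consistent for the convolution product if and only if the compact
Hausdorff group `G` (with normalized Haar probability measure `μ`) is abelian. -/
theorem sub_cylindrically_consistent_iff_comm
    {G : Type*} [Group G] [TopologicalSpace G] [IsTopologicalGroup G]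
    [CompactSpace G] [T2Space G] [MeasurableSpace G] [BorelSpace G]
    (μ : Measure G) [μ.IsHaarMeasure] [IsProbabilityMeasure μ] :
    (∀ f f' : G → ℂ, Continuous f → Continuous f' → ∀ g₁ g₂ : G,
        convolution' (μ.prod μ) (fun p : G × G => f (p.1 * p.2))
            (fun p : G × G => f' (p.1 * p.2)) (g₁, g₂)
          = convolution' μ f f' (g₁ * g₂))
      ↔ ∀ a b : G, a * b = b * a := by
  constructor
  · -- cylindrical consistency implies commutativity
    intro H a b
    by_contra hne
    obtain ⟨U, V, hU, hV, hUab, hVba, hUV⟩ := t2_separation hne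
    have hmulc : Continuous fun p : G × G => p.1 * p.2 := continuous_fst.mul continuous_snd
    have hmulc' : Continuous fun p : G × G => p.2 * p.1 := continuous_snd.mul continuous_fst
    have hW : IsOpen {p : G × G | p.1 * p.2 ∈ U ∧ p.2 * p.1 ∈ V} :=
      (hU.preimage hmulc).inter (hV.preimage hmulc')
    obtain ⟨A, B, hA, hB, haA, hbB, hAB⟩ := isOpen_prod_iff.1 hW a b ⟨hUab, hVba⟩
    obtain ⟨Ka, hKa, haKa, hKaA⟩ := exists_compact_subset hA haA
    obtain ⟨Kb, hKb, hbKb, hKbB⟩ := exists_compact_subset hB hbB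
    set S₁ : Set G := (fun p : G × G => p.1 * p.2) '' (Ka ×ˢ Kb) with hS₁def
    set S₂ : Set G := (fun p : G × G => p.2 * p.1) '' (Ka ×ˢ Kb) with hS₂def
    have hS₁U : S₁ ⊆ U := by
      rintro _ ⟨⟨x, y⟩, ⟨hx, hy⟩, rfl⟩
      exact (hAB (Set.mk_mem_prod (hKaA hx) (hKbB hy))).1
    have hS₂V : S₂ ⊆ V := by
      rintro _ ⟨⟨x, y⟩, ⟨hx, hy⟩, rfl⟩
      exact (hAB (Set.mk_mem_prod (hKaA hx) (hKbB hy))).2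
    obtain ⟨φ, hφ0, hφ1, hφ01⟩ := exists_continuous_zero_one_of_isClosed
      (isClosed_compl_iff.2 hU) (((hKa.prod hKb).image hmulc).isClosed)
      (Set.disjoint_left.2 fun x hx hxS => hx (hS₁U hxS))
    obtain ⟨ψ, hψ0, hψ1, hψ01⟩ := exists_continuous_zero_one_of_isClosed
      (isClosed_compl_iff.2 hV) (((hKa.prod hKb).image hmulc').isClosed)
      (Set.disjoint_left.2 fun x hx hxS => hx (hS₂V hxS))
    set f : G → ℂ := fun x => (ψ x⁻¹ : ℂ) with hfdef
    set f' : G → ℂ := fun x => (φ x : ℂ) with hf'def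
    have hf : Continuous f := Complex.continuous_ofReal.comp (ψ.continuous.comp continuous_inv)
    have hf' : Continuous f' := Complex.continuous_ofReal.comp φ.continuous
    set g : G × G → ℝ := fun p => ψ (p.2 * p.1) * φ (p.1 * p.2) with hgdef
    have hgc : Continuous g := (ψ.continuous.comp hmulc').mul (φ.continuous.comp hmulc)
    have hL : convolution' (μ.prod μ) (fun p : G × G => f (p.1 * p.2))
        (fun p : G × G => f' (p.1 * p.2)) (1, 1)
        = ∫ p : G × G, (g p : ℂ) ∂(μ.prod μ) := by
      unfold convolution'
      congr 1
      funext p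
      simp [hfdef, hf'def, hgdef, mul_inv_rev]
    have hR : convolution' μ f f' (1 * 1) = 0 := by
      unfold convolution'
      have hz : ∀ h : G, f (1 * 1 * h⁻¹) * f' h = 0 := by
        intro h
        by_cases hh : h ∈ U
        · have hhV : h ∈ Vᶜ := fun hv => Set.disjoint_left.1 hUV hh hv
          have : ψ h = 0 := hψ0 hhV
          simp [hfdef, this]
        · have : φ h = 0 := hφ0 hh
          simp [hf'def, this]
      simp only [hz, integral_zero]
    have h0 : ∫ p : G × G, (g p : ℂ) ∂(μ.prod μ) = 0 := by
      rw [← hL, H f f' hf hf' 1 1, hR]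
    have h1 : ∫ p : G × G, (g p : ℂ) ∂(μ.prod μ)
        = ((∫ p : G × G, g p ∂(μ.prod μ) : ℝ) : ℂ) := integral_ofReal
    rw [h1] at h0
    have hgzero : (∫ p : G × G, g p ∂(μ.prod μ)) = 0 := by exact_mod_cast h0
    set s : Set (G × G) := interior Ka ×ˢ interior Kb with hsdef
    have hsm : MeasurableSet s :=
      isOpen_interior.measurableSet.prod isOpen_interior.measurableSet
    have hgm : Measurable g := measurable_continuous_of_prod hgc
    obtain ⟨C, hC⟩ := isCompact_univ.exists_bound_of_continuousOn hgc.continuousOn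
    have hgint : Integrable g (μ.prod μ) :=
      ⟨hgm.aestronglyMeasurable,
        HasFiniteIntegral.of_bounded (ae_of_all _ fun x => hC x (mem_univ x))⟩
    have hnonneg : ∀ p, 0 ≤ g p := fun p => mul_nonneg (hψ01 _).1 (hφ01 _).1
    have hone : ∀ p ∈ s, g p = (fun _ : G × G => (1 : ℝ)) p := by
      rintro ⟨x, y⟩ ⟨hx, hy⟩
      have hx' : x ∈ Ka := interior_subset hx
      have hy' : y ∈ Kb := interior_subset hy
      have h1 : φ (x * y) = 1 := hφ1 ⟨(x, y), Set.mk_mem_prod hx' hy', rfl⟩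
      have h2 : ψ (y * x) = 1 := hψ1 ⟨(x, y), Set.mk_mem_prod hx' hy', rfl⟩
      simp [hgdef, h1, h2]
    have hsub : ∫ p in s, g p ∂(μ.prod μ) ≤ ∫ p, g p ∂(μ.prod μ) :=
      setIntegral_le_integral hgint (ae_of_all _ hnonneg)
    have hset : ∫ p in s, g p ∂(μ.prod μ) = ((μ.prod μ) s).toReal := by
      rw [setIntegral_congr_fun hsm hone]
      simp [Measure.real]
    have hpos : 0 < ((μ.prod μ) s).toReal := by
      have h1 : 0 < μ (interior Ka) := isOpen_interior.measure_pos μ ⟨a, haKa⟩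
      have h2 : 0 < μ (interior Kb) := isOpen_interior.measure_pos μ ⟨b, hbKb⟩
      have hps : (μ.prod μ) s = μ (interior Ka) * μ (interior Kb) :=
        Measure.prod_prod _ _
      rw [hps]
      exact ENNReal.toReal_pos (mul_ne_zero h1.ne' h2.ne')
        (ENNReal.mul_ne_top (measure_ne_top _ _) (measure_ne_top _ _))
    rw [hset, hgzero] at hsub
    linarith
  · -- commutativity implies cylindrical consistency
    intro comm f f' hf hf' g₁ g₂
    have key : ∀ F : G → ℂ, Continuous F →
        ∫ p : G × G, F (p.1 * p.2) ∂(μ.prod μ) = ∫ h, F h ∂μ := by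
      intro F hF
      have hc : Continuous fun p : G × G => F (p.1 * p.2) :=
        hF.comp (continuous_fst.mul continuous_snd)
      have hm : Measurable fun p : G × G => F (p.1 * p.2) :=
        measurable_continuous_of_prod_complex hc
      obtain ⟨C, hC⟩ := isCompact_univ.exists_bound_of_continuousOn hc.continuousOn
      have hint : Integrable (fun p : G × G => F (p.1 * p.2)) (μ.prod μ) :=
        ⟨hm.aestronglyMeasurable,
          HasFiniteIntegral.of_bounded (ae_of_all _ fun x => hC x (mem_univ x))⟩
      rw [MeasureTheory.integral_prod _ hint]
      have hinner : ∀ x : G, ∫ y, F (x * y) ∂μ = ∫ y, F y ∂μ := fun x =>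
        integral_mul_left_eq_self F x
      simp only [hinner]
      simp
    have h1 : ∀ p : G × G,
        g₁ * p.1⁻¹ * (g₂ * p.2⁻¹) = g₁ * g₂ * (p.1 * p.2)⁻¹ := by
      intro p
      rw [mul_inv_rev, mul_assoc, mul_assoc, ← mul_assoc p.1⁻¹ g₂, comm p.1⁻¹ g₂,
        mul_assoc, comm p.1⁻¹ p.2⁻¹]
    calc convolution' (μ.prod μ) (fun p : G × G => f (p.1 * p.2))
          (fun p : G × G => f' (p.1 * p.2)) (g₁, g₂)
        = ∫ p : G × G, (fun k => f (g₁ * g₂ * k⁻¹) * f' k) (p.1 * p.2) ∂(μ.prod μ) := by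
          unfold convolution'
          congr 1
          funext p
          simp only [Prod.fst_mul, Prod.snd_mul, Prod.fst_inv, Prod.snd_inv]
          rw [h1 p]
      _ = ∫ h, f (g₁ * g₂ * h⁻¹) * f' h ∂μ :=
          key _ ((hf.comp (continuous_const.mul continuous_inv)).mul hf')
      _ = convolution' μ f f' (g₁ * g₂) := rfl
end

section
/- Let f, h : ℝ → ℂ be 2π-periodic continuous functions and define their convolution (f ∗ h)(φ') = (1/2π) ∫_{−π}^{π} f(φ) h(φ'−φ) dφ. Then for every x ∈ ℝ, the extended Fourier transform of the convolution satisfies F(f ∗ h)(x) = Σ_{n∈ℤ} c_n(f) c_n(h) · sinc(π(n−x)), the sum over ℤ converging absolutely. (This is the explicit formula for the star product of U(1) group Fourier transforms: (u ⋆ v)(x) = Σ_{x'∈ℤ} u(x') v(x') sin(π(x'−x))/(π(x'−x)) for u = F(f), v = F(h).) -/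
open MeasureTheory intervalIntegral

/-- The extended `U(1)` group Fourier transform of a `2π`-periodic function, defined for
every real `x`: `F(f)(x) = (1/2π) ∫_{-π}^{π} f(φ) e^{-iφx} dφ`. -/
noncomputable def extFourier (f : ℝ → ℂ) (x : ℝ) : ℂ :=
  (1 / (2 * (Real.pi : ℂ))) *
    ∫ φ in (-Real.pi)..Real.pi, f φ * Complex.exp (-(Complex.I * φ * x))

/-- `sinc t = sin t / t` for `t ≠ 0`, and `sinc 0 = 1` (as a complex number). -/
noncomputable def sinc' (t : ℝ) : ℂ :=
  if t = 0 then 1 else ((Real.sin t / t : ℝ) : ℂ)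

/-- The convolution of two `2π`-periodic functions:
`(f ∗ h)(φ') = (1/2π) ∫_{-π}^{π} f(φ) h(φ' - φ) dφ`. -/
noncomputable def convPer (f h : ℝ → ℂ) (φ' : ℝ) : ℂ :=
  (1 / (2 * (Real.pi : ℂ))) * ∫ φ in (-Real.pi)..Real.pi, f φ * h (φ' - φ)

namespace ExtFourierAux

local notation "π" => Real.pi

lemma pi_ne : (π : ℂ) ≠ 0 := by exact_mod_cast Real.pi_ne_zero

lemma sinc'_norm_le (t : ℝ) : ‖sinc' t‖ ≤ 1 := by
  unfold sinc'
  split_ifs with ht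
  · simp
  · rw [Complex.norm_real, Real.norm_eq_abs, abs_div]
    rw [div_le_one (by positivity)]
    exact Real.abs_sin_le_abs

instance : Fact (0 < 2 * π) := ⟨by positivity⟩

lemma contLift {f : ℝ → ℂ} (hf : Continuous f) (hpf : Function.Periodic f (2 * π)) :
    Continuous (hpf.lift : AddCircle (2 * π) → ℂ) :=
  hf.quotient_liftOn' _

lemma fourierCoeff_lift (f : ℝ → ℂ) (hpf : Function.Periodic f (2 * π)) (n : ℤ) :
    fourierCoeff (hpf.lift : AddCircle (2 * π) → ℂ) n = extFourier f n := by
  rw [fourierCoeff_eq_intervalIntegral _ n (-π)]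
  have he : -π + 2 * π = π := by ring
  rw [he, extFourier]
  rw [Complex.real_smul]
  push_cast
  congr 1
  refine intervalIntegral.integral_congr fun t ht => ?_
  rw [fourier_coe_apply, Function.Periodic.lift_coe, smul_eq_mul, mul_comm]
  congr 1
  congr 1
  push_cast
  field_simp [pi_ne]

lemma fourier_eq (n : ℤ) (φ : ℝ) :
    fourier n (φ : AddCircle (2 * π)) = Complex.exp (Complex.I * φ * n) := by
  rw [fourier_coe_apply]
  congr 1
  push_cast
  field_simp [pi_ne]

lemma integral_exp_eq_sinc (c : ℝ) :
    (∫ φ in (-π)..π, Complex.exp (Complex.I * φ * c)) = 2 * π * sinc' (π * c) := by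
  rcases eq_or_ne c 0 with rfl | hc
  · simp [sinc']
    ring
  · have hc' : Complex.I * c ≠ 0 := by
      simp [Complex.I_ne_zero, Complex.ofReal_eq_zero, hc]
    have : ∀ φ : ℝ, Complex.I * φ * c = (Complex.I * c) * φ := fun φ => by ring
    simp_rw [this]
    rw [integral_exp_mul_complex hc']
    rw [sinc', if_neg (by positivity)]
    have hsin : Complex.exp (Complex.I * c * π) - Complex.exp (Complex.I * c * (-π : ℝ))
        = 2 * Complex.I * Complex.sin (π * c) := by
      rw [Complex.sin]
      push_cast
      ring_nf
      rw [Complex.I_sq]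
      ring
    rw [hsin]
    have hπc : ((π * c : ℝ) : ℂ) ≠ 0 := by
      exact_mod_cast mul_ne_zero Real.pi_ne_zero hc
    push_cast [Complex.ofReal_sin, Complex.sin] at hπc ⊢
    field_simp

open AddCircle in
lemma summable_sq_fourierCoeff (F : C(AddCircle (2 * π), ℂ)) :
    Summable (fun n : ℤ => ‖fourierCoeff (F : AddCircle (2 * π) → ℂ) n‖ ^ 2) := by
  have hm := lp.memℓp (fourierBasis.repr (ContinuousMap.toLp (E := ℂ) 2 haarAddCircle ℂ F))
  rw [memℓp_gen_iff (by norm_num)] at hm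
  have : ∀ n : ℤ, fourierBasis.repr (ContinuousMap.toLp (E := ℂ) 2 haarAddCircle ℂ F) n
      = fourierCoeff (F : AddCircle (2 * π) → ℂ) n := by
    intro n
    rw [fourierBasis_repr, fourierCoeff_toLp]
  refine hm.congr fun n => ?_
  rw [this n]
  norm_num

lemma extFourier_convPer (f h : ℝ → ℂ) (hf : Continuous f) (hh : Continuous h)
    (hph : Function.Periodic h (2 * π)) (n : ℤ) :
    extFourier (convPer f h) n = extFourier f n * extFourier h n := by
  have hπ : (0:ℝ) < π := Real.pi_pos
  have hπc : ((π : ℝ) : ℂ) ≠ 0 := pi_ne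
  have hle : (-π : ℝ) ≤ π := by linarith
  set c : ℂ := 1 / (2 * (π : ℂ)) with hc
  set K : ℝ → ℝ → ℂ :=
    fun φ' φ => f φ * h (φ' - φ) * Complex.exp (-(Complex.I * φ' * n)) with hK
  set g : ℝ → ℂ := fun ψ : ℝ => h ψ * Complex.exp (-(Complex.I * ψ * n)) with hg
  have hgint : ∫ ψ in (-π)..π, g ψ = 2 * (π:ℂ) * extFourier h n := by
    rw [extFourier]
    push_cast
    rw [← mul_assoc]
    field_simp
    rfl
  have hfint : ∫ φ in (-π)..π, f φ * Complex.exp (-(Complex.I * φ * n))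
      = 2 * (π:ℂ) * extFourier f n := by
    rw [extFourier]
    push_cast
    rw [← mul_assoc]
    field_simp
    refine intervalIntegral.integral_congr fun φ _ => ?_
    ring_nf
  have hgper : Function.Periodic g (2 * π) := by
    intro ψ
    have h1 := Complex.exp_int_mul_two_pi_mul_I (-n)
    simp only [hg]
    rw [hph ψ]
    congr 1
    rw [show -(Complex.I * ((ψ + 2*π : ℝ):ℂ) * n)
        = -(Complex.I * ψ * n) + ((-n : ℤ) : ℂ) * (2 * π * Complex.I) by push_cast; ring,
      Complex.exp_add, h1, mul_one]
  -- Step 1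
  have step1 : extFourier (convPer f h) n
      = c * (c * ∫ φ' in (-π)..π, ∫ φ in (-π)..π, K φ' φ) := by
    rw [extFourier]
    push_cast
    rw [← hc]
    congr 1
    calc (∫ φ' in (-π)..π, convPer f h φ' * Complex.exp (-(Complex.I * φ' * (n:ℂ))))
        = ∫ φ' in (-π)..π, c * ∫ φ in (-π)..π, K φ' φ := by
          refine intervalIntegral.integral_congr fun φ' _ => ?_
          rw [convPer, ← hc, mul_assoc, ← intervalIntegral.integral_mul_const]
      _ = c * ∫ φ' in (-π)..π, ∫ φ in (-π)..π, K φ' φ :=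
          intervalIntegral.integral_const_mul _ _
  -- Step 2: Fubini
  have hKcont : Continuous fun p : ℝ × ℝ => K p.1 p.2 := by
    simp only [hK]; fun_prop
  have hint : Integrable (Function.uncurry K)
      ((volume.restrict (Set.Ioc (-π) π)).prod (volume.restrict (Set.Ioc (-π) π))) := by
    rw [Measure.prod_restrict]
    exact ((hKcont.continuousOn.integrableOn_compact
      (isCompact_Icc.prod isCompact_Icc)).mono_set
      (Set.prod_mono Set.Ioc_subset_Icc_self Set.Ioc_subset_Icc_self))
  have swap : (∫ φ' in (-π)..π, ∫ φ in (-π)..π, K φ' φ)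
      = ∫ φ in (-π)..π, ∫ φ' in (-π)..π, K φ' φ := by
    rw [intervalIntegral.integral_of_le hle, intervalIntegral.integral_of_le hle]
    simp_rw [intervalIntegral.integral_of_le hle]
    exact integral_integral_swap hint
  -- Step 3: inner integral
  have inner : ∀ φ : ℝ, (∫ φ' in (-π)..π, K φ' φ)
      = f φ * Complex.exp (-(Complex.I * φ * n)) * (2 * (π:ℂ) * extFourier h n) := by
    intro φ
    have key : (∫ φ' in (-π)..π, K φ' φ)
        = f φ * Complex.exp (-(Complex.I * φ * n)) * ∫ φ' in (-π)..π, g (φ' - φ) := by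
      rw [← intervalIntegral.integral_const_mul]
      refine intervalIntegral.integral_congr fun φ' _ => ?_
      simp only [hK, hg]
      rw [show -(Complex.I * (φ':ℂ) * n)
          = -(Complex.I * ((φ' - φ : ℝ):ℂ) * n) + -(Complex.I * (φ:ℂ) * n) by push_cast; ring,
        Complex.exp_add]
      ring
    rw [key, intervalIntegral.integral_comp_sub_right g φ,
      show (π - φ : ℝ) = (-π - φ) + 2 * π by ring,
      hgper.intervalIntegral_add_eq (-π - φ) (-π),
      show (-π + 2 * π : ℝ) = π by ring, hgint]
  -- assemble
  rw [step1, swap]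
  simp_rw [inner]
  rw [intervalIntegral.integral_mul_const, hfint, hc]
  field_simp

end ExtFourierAux

open ExtFourierAux in
/-- For `2π`-periodic continuous `f, h` and every real `x`, the extended Fourier
transform of the convolution is
`F(f ∗ h)(x) = Σ_{n ∈ ℤ} c_n(f) c_n(h) sinc(π(n - x))`, the sum converging absolutely:
the explicit formula for the star product of `U(1)` group Fourier transforms. -/
theorem extFourier_convPer_eq_tsum (f h : ℝ → ℂ)
    (hf : Continuous f) (hh : Continuous h)
    (hpf : Function.Periodic f (2 * Real.pi))
    (hph : Function.Periodic h (2 * Real.pi)) (x : ℝ) :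
    Summable (fun n : ℤ =>
      ‖extFourier f n * extFourier h n * sinc' (Real.pi * (n - x))‖) ∧
    HasSum (fun n : ℤ =>
      extFourier f n * extFourier h n * sinc' (Real.pi * (n - x)))
      (extFourier (convPer f h) x) := by
  have hπ : (0:ℝ) < Real.pi := Real.pi_pos
  have hle : (-Real.pi : ℝ) ≤ Real.pi := by linarith
  set a : ℤ → ℂ := fun n => extFourier f n * extFourier h n with ha
  -- summability of ‖a‖
  have sqf : Summable (fun n : ℤ => ‖extFourier f n‖ ^ 2) := by
    have := summable_sq_fourierCoeff ⟨hpf.lift, contLift hf hpf⟩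
    simpa [fourierCoeff_lift f hpf] using this
  have sqh : Summable (fun n : ℤ => ‖extFourier h n‖ ^ 2) := by
    have := summable_sq_fourierCoeff ⟨hph.lift, contLift hh hph⟩
    simpa [fourierCoeff_lift h hph] using this
  have hsa : Summable (fun n : ℤ => ‖a n‖) := by
    refine Summable.of_nonneg_of_le (fun n => norm_nonneg _) (fun n => ?_)
      ((sqf.add sqh).div_const 2)
    rw [ha, norm_mul]
    nlinarith [sq_nonneg (‖extFourier f n‖ - ‖extFourier h n‖), norm_nonneg (extFourier f n),
      norm_nonneg (extFourier h n)]
  -- summability of the target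
  have hsum1 : Summable (fun n : ℤ =>
      ‖extFourier f n * extFourier h n * sinc' (Real.pi * (n - x))‖) := by
    refine Summable.of_nonneg_of_le (fun n => norm_nonneg _) (fun n => ?_) hsa
    rw [norm_mul]
    calc ‖a n‖ * ‖sinc' (Real.pi * (n - x))‖ ≤ ‖a n‖ * 1 :=
          mul_le_mul_of_nonneg_left (sinc'_norm_le _) (norm_nonneg _)
      _ = ‖a n‖ := mul_one _
  refine ⟨hsum1, ?_⟩
  -- convPer is continuous and periodic
  have hcc : Continuous (convPer f h) := by
    have : Continuous fun φ' => ∫ φ in (-Real.pi)..Real.pi, f φ * h (φ' - φ) :=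
      intervalIntegral.continuous_parametric_intervalIntegral_of_continuous' (by fun_prop) _ _
    exact continuous_const.mul this
  have hpc : Function.Periodic (convPer f h) (2 * Real.pi) := by
    intro φ'
    simp only [convPer]
    congr 1
    refine intervalIntegral.integral_congr fun φ _ => ?_
    rw [show φ' + 2 * Real.pi - φ = (φ' - φ) + 2 * Real.pi by ring, hph]
  -- pointwise Fourier series of convPer
  set G : C(AddCircle (2 * Real.pi), ℂ) := ⟨hpc.lift, contLift hcc hpc⟩ with hG
  have hGc : ∀ n : ℤ, fourierCoeff (G : AddCircle (2 * Real.pi) → ℂ) n = a n := by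
    intro n
    show fourierCoeff (hpc.lift : AddCircle (2 * Real.pi) → ℂ) n = a n
    rw [fourierCoeff_lift, extFourier_convPer f h hf hh hph n]
  have hGsum : Summable (fourierCoeff (G : AddCircle (2 * Real.pi) → ℂ)) := by
    refine Summable.congr (Summable.of_norm hsa) fun n => (hGc n).symm
  have hpt : ∀ φ : ℝ, HasSum (fun n : ℤ => a n * Complex.exp (Complex.I * φ * n))
      (convPer f h φ) := by
    intro φ
    have := has_pointwise_sum_fourier_series_of_summable hGsum (φ : AddCircle (2 * Real.pi))
    simp only [hGc, smul_eq_mul, fourier_eq] at this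
    exact this
  -- the family to integrate
  set F : ℤ → ℝ → ℂ := fun n φ => a n * Complex.exp (Complex.I * φ * (((n : ℝ) - x : ℝ) : ℂ))
    with hF
  set μ : Measure ℝ := volume.restrict (Set.Ioc (-Real.pi) Real.pi) with hμ
  have hnorm1 : ∀ (t s : ℝ), ‖Complex.exp (Complex.I * (t:ℂ) * (s:ℂ))‖ = 1 := by
    intro t s
    rw [show Complex.I * (t:ℂ) * (s:ℂ) = ((t * s : ℝ) : ℂ) * Complex.I by push_cast; ring,
      Complex.norm_exp_ofReal_mul_I]
  have hFint : ∀ n : ℤ, Integrable (F n) μ := by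
    intro n
    have : Continuous (F n) := by simp only [hF]; fun_prop
    exact this.integrableOn_Ioc
  have hFnormval : ∀ n : ℤ, (∫ φ, ‖F n φ‖ ∂μ) = ‖a n‖ * (2 * Real.pi) := by
    intro n
    have : ∀ φ : ℝ, ‖F n φ‖ = ‖a n‖ := by
      intro φ
      rw [hF]
      simp only
      rw [norm_mul, hnorm1, mul_one]
    simp_rw [this]
    rw [hμ, MeasureTheory.setIntegral_const, Real.volume_real_Ioc_of_le hle, smul_eq_mul]
    ring
  have hFnorms : Summable (fun n : ℤ => ∫ φ, ‖F n φ‖ ∂μ) := by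
    refine Summable.congr (hsa.mul_right (2 * Real.pi)) fun n => (hFnormval n).symm
  -- swap sum and integral
  have H := MeasureTheory.hasSum_integral_of_summable_integral_norm hFint hFnorms
  -- identify the tsum
  have htsum : ∀ φ : ℝ, (∑' n : ℤ, F n φ)
      = convPer f h φ * Complex.exp (-(Complex.I * φ * x)) := by
    intro φ
    refine HasSum.tsum_eq ?_
    have := (hpt φ).mul_right (Complex.exp (-(Complex.I * φ * x)))
    refine this.congr_fun fun n => ?_
    rw [hF]
    simp only
    rw [show Complex.I * (φ:ℂ) * (((n:ℝ) - x : ℝ):ℂ)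
        = Complex.I * (φ:ℂ) * (n:ℂ) + -(Complex.I * (φ:ℂ) * (x:ℂ)) by push_cast; ring,
      Complex.exp_add]
    ring
  -- identify each integral
  have hFn : ∀ n : ℤ, (∫ φ, F n φ ∂μ)
      = a n * (2 * (Real.pi:ℂ) * sinc' (Real.pi * ((n:ℝ) - x))) := by
    intro n
    rw [hμ, ← intervalIntegral.integral_of_le hle]
    rw [show (∫ φ in (-Real.pi)..Real.pi, F n φ)
        = a n * ∫ φ in (-Real.pi)..Real.pi,
            Complex.exp (Complex.I * φ * (((n:ℝ) - x : ℝ):ℂ)) from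
      intervalIntegral.integral_const_mul _ _]
    rw [integral_exp_eq_sinc ((n:ℝ) - x)]
  have H2 := H.mul_left (1 / (2 * (Real.pi : ℂ)))
  have hpi2 : (2 * (Real.pi : ℂ)) ≠ 0 := mul_ne_zero two_ne_zero pi_ne
  have hval : (fun n : ℤ => (1 / (2 * (Real.pi : ℂ))) * ∫ φ, F n φ ∂μ)
      = fun n : ℤ => extFourier f n * extFourier h n * sinc' (Real.pi * (n - x)) := by
    funext n
    rw [hFn n, ha]
    field_simp
  have htot : (1 / (2 * (Real.pi : ℂ))) * ∫ φ, (∑' n : ℤ, F n φ) ∂μ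
      = extFourier (convPer f h) x := by
    simp_rw [htsum]
    rw [hμ, ← intervalIntegral.integral_of_le hle, extFourier]
  rw [hval, htot] at H2
  exact H2
end

section
/- Let f : ℝ → ℂ be 2π-periodic and square-integrable on (−π, π]. Then for every x ∈ ℝ, F(f)(x) = Σ_{n∈ℤ} c_n(f) · sinc(π(n−x)), the sum over ℤ converging absolutely. In particular, the extended Fourier transform F(f) : ℝ → ℂ is completely determined by its values F(f)(n) = c_n(f) on the integers (the U(1) sampling property). -/
open MeasureTheory

open Set Complex AddCircle intervalIntegral

lemma sinc'_neg (t : ℝ) : sinc' (-t) = sinc' t := by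
  unfold sinc'
  rcases eq_or_ne t 0 with h | h
  · simp [h]
  · rw [if_neg (by simpa using h), if_neg h, Real.sin_neg, neg_div_neg_eq]

lemma conj_sinc' (t : ℝ) : (starRingEnd ℂ) (sinc' t) = sinc' t := by
  unfold sinc'
  split
  · simp
  · exact Complex.conj_ofReal _

lemma exp_integral (c : ℝ) :
    (1 / (2 * (Real.pi : ℂ))) * ∫ φ in (-Real.pi)..Real.pi, Complex.exp (Complex.I * c * φ) =
      sinc' (Real.pi * c) := by
  have hπ : (Real.pi : ℂ) ≠ 0 := Complex.ofReal_ne_zero.mpr Real.pi_ne_zero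
  rcases eq_or_ne c 0 with hc | hc
  · simp [hc, sinc', mul_zero]
    field_simp
    ring
  · have hcC : (c : ℂ) ≠ 0 := Complex.ofReal_ne_zero.mpr hc
    have hIc : Complex.I * c ≠ 0 := mul_ne_zero Complex.I_ne_zero hcC
    rw [integral_exp_mul_complex hIc]
    have h1 : Complex.I * c * (Real.pi : ℂ) = ((Real.pi * c : ℝ) : ℂ) * Complex.I := by
      push_cast; ring
    have h2 : Complex.I * c * ((-Real.pi : ℝ) : ℂ) = (-((Real.pi * c : ℝ) : ℂ)) * Complex.I := by
      push_cast; ring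
    rw [h1, h2, Complex.exp_mul_I, Complex.exp_mul_I, Complex.cos_neg, Complex.sin_neg]
    have hs : sinc' (Real.pi * c) = ((Real.sin (Real.pi * c) : ℝ) : ℂ) / ((Real.pi * c : ℝ) : ℂ) := by
      rw [sinc', if_neg (mul_ne_zero Real.pi_ne_zero hc), Complex.ofReal_div]
    rw [hs, Complex.ofReal_sin, Complex.ofReal_mul]
    field_simp
    ring

lemma memLp_liftIoc {T : ℝ} [hT : Fact (0 < T)] (a : ℝ) {g : ℝ → ℂ}
    (hg : MemLp g 2 (volume.restrict (Set.Ioc a (a + T)))) :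
    MemLp (AddCircle.liftIoc T a g) 2 (@AddCircle.haarAddCircle T hT) := by
  set μI := volume.restrict (Set.Ioc a (a + T)) with hμI
  set ν : Measure (Set.Ioc a (a + T)) := Measure.comap Subtype.val μI with hν
  have m : MeasurableSet (Set.Ioc a (a + T)) := measurableSet_Ioc
  have hmapν : Measure.map Subtype.val ν = μI := by
    rw [hν, map_comap_subtype_coe m μI, hμI,
      Measure.restrict_restrict m, Set.inter_self]
  set e := AddCircle.measurableEquivIoc T a with he
  have hsymm : ⇑e.symm = ((↑) : ℝ → AddCircle T) ∘ ((↑) : Set.Ioc a (a + T) → ℝ) := by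
    simp only [he, AddCircle.measurableEquivIoc, AddCircle.equivIoc,
      QuotientAddGroup.equivIocMod, MeasurableEquiv.symm_mk, MeasurableEquiv.coe_mk,
      Equiv.coe_fn_symm_mk]
    rfl
  have hvol : (volume : Measure (AddCircle T)) = Measure.map e.symm ν := by
    rw [← (AddCircle.measurePreserving_mk T a).map_eq, ← hμI, ← hmapν,
      Measure.map_map AddCircle.measurable_mk' measurable_subtype_coe, ← hsymm]
  have h1 : MemLp (AddCircle.liftIoc T a g) 2 (volume : Measure (AddCircle T)) := by
    rw [hvol, MeasurableEquiv.memLp_map_measure_iff]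
    have hfun : (AddCircle.liftIoc T a g) ∘ ⇑e.symm = g ∘ Subtype.val := by
      funext y
      have : (AddCircle.equivIoc T a) (e.symm y) = y := e.apply_symm_apply y
      simp only [Function.comp_apply, AddCircle.liftIoc, this, Set.restrict_apply]
    rw [hfun, ← (MeasurableEmbedding.subtype_coe m).memLp_map_measure_iff, hmapν]
    exact hg
  have hhaar : (@AddCircle.haarAddCircle T hT) =
      (ENNReal.ofReal T)⁻¹ • (volume : Measure (AddCircle T)) := by
    rw [AddCircle.volume_eq_smul_haarAddCircle, ← smul_assoc, smul_eq_mul,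
      ENNReal.inv_mul_cancel (by simp [hT.out]) ENNReal.ofReal_ne_top, one_smul]
  rw [hhaar]
  exact h1.smul_measure (by simp [hT.out])

instance fact_two_pi_pos : Fact (0 < 2 * Real.pi) := ⟨by positivity⟩

lemma fourierCoeff_liftIoc_pi (g : ℝ → ℂ) (n : ℤ) :
    fourierCoeff (AddCircle.liftIoc (2 * Real.pi) (-Real.pi) g) n =
      (1 / (2 * (Real.pi : ℂ))) *
        ∫ φ in (-Real.pi)..Real.pi, Complex.exp (-(Complex.I * n * φ)) * g φ := by
  have hπ := Real.pi_pos
  rw [fourierCoeff_eq_intervalIntegral _ n (-Real.pi)]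
  have hb : -Real.pi + 2 * Real.pi = Real.pi := by ring
  rw [hb]
  have hcongr : (∫ φ in (-Real.pi)..Real.pi,
        (fourier (-n) (φ : AddCircle (2 * Real.pi))) •
          (AddCircle.liftIoc (2 * Real.pi) (-Real.pi) g φ))
      = ∫ φ in (-Real.pi)..Real.pi, Complex.exp (-(Complex.I * n * φ)) * g φ := by
    rw [intervalIntegral.integral_of_le (by linarith),
      intervalIntegral.integral_of_le (by linarith)]
    refine setIntegral_congr_fun measurableSet_Ioc fun φ hφ => ?_
    have hmem : φ ∈ Set.Ioc (-Real.pi) (-Real.pi + 2 * Real.pi) := by rwa [hb]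
    rw [AddCircle.liftIoc_coe_apply hmem, fourier_coe_apply, smul_eq_mul]
    congr 2
    have h2π : (2 * (Real.pi : ℂ)) ≠ 0 := by
      simp [Real.pi_ne_zero, Complex.ofReal_ne_zero]
    push_cast
    field_simp
  rw [hcongr, Complex.real_smul]
  congr 1
  push_cast
  ring

/-- Sampling property of the `U(1)` group Fourier transform: for a `2π`-periodic
function `f` which is square-integrable on `(-π, π]` and every real `x`,
`F(f)(x) = Σ_{n ∈ ℤ} c_n(f) sinc(π(n - x))`, the sum converging absolutely. In
particular `F(f)` is completely determined by its values `c_n(f) = F(f)(n)` on `ℤ`. -/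
theorem extFourier_sampling (f : ℝ → ℂ)
    (hpf : Function.Periodic f (2 * Real.pi))
    (hL2 : MemLp f 2 (volume.restrict (Set.Ioc (-Real.pi) Real.pi))) (x : ℝ) :
    Summable (fun n : ℤ => ‖extFourier f n * sinc' (Real.pi * (n - x))‖) ∧
    HasSum (fun n : ℤ => extFourier f n * sinc' (Real.pi * (n - x)))
      (extFourier f x) := by
  have hπ := Real.pi_pos
  have hb : -Real.pi + 2 * Real.pi = Real.pi := by ring
  have h2π : (2 * (Real.pi : ℂ)) ≠ 0 := by
    simp [Real.pi_ne_zero, Complex.ofReal_ne_zero]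
  -- the two functions lifted to the circle
  have hL2' : MemLp f 2 (volume.restrict (Set.Ioc (-Real.pi) (-Real.pi + 2 * Real.pi))) := by
    rw [hb]; exact hL2
  have hG : MemLp (AddCircle.liftIoc (2 * Real.pi) (-Real.pi) f) 2 AddCircle.haarAddCircle :=
    memLp_liftIoc _ hL2'
  set h : ℝ → ℂ := fun φ => Complex.exp (Complex.I * x * φ) with hh
  have hhm : MemLp h 2 (volume.restrict (Set.Ioc (-Real.pi) (-Real.pi + 2 * Real.pi))) := by
    haveI : IsFiniteMeasure (volume.restrict (Set.Ioc (-Real.pi) (-Real.pi + 2 * Real.pi))) := by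
      constructor
      rw [Measure.restrict_apply_univ]
      exact measure_Ioc_lt_top
    refine MemLp.of_bound (Continuous.aestronglyMeasurable (by fun_prop)) 1 ?_
    filter_upwards with φ
    simp [hh, Complex.norm_exp]
  have hH : MemLp (AddCircle.liftIoc (2 * Real.pi) (-Real.pi) h) 2 AddCircle.haarAddCircle :=
    memLp_liftIoc _ hhm
  set G : Lp ℂ 2 (@AddCircle.haarAddCircle (2 * Real.pi) _) := hG.toLp _ with hGdef
  set H : Lp ℂ 2 (@AddCircle.haarAddCircle (2 * Real.pi) _) := hH.toLp _ with hHdef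
  -- Fourier coefficients of G
  have coeffG : ∀ n : ℤ, fourierCoeff (⇑G) n = extFourier f n := by
    intro n
    have h1 : fourierCoeff (⇑G) n
        = fourierCoeff (AddCircle.liftIoc (2 * Real.pi) (-Real.pi) f) n := by
      unfold fourierCoeff
      apply MeasureTheory.integral_congr_ae
      filter_upwards [hG.coeFn_toLp] with t ht
      rw [hGdef, ht]
    rw [h1, fourierCoeff_liftIoc_pi, extFourier]
    congr 1
    apply intervalIntegral.integral_congr
    intro φ _
    simp only
    rw [mul_comm]
    congr 2
    push_cast
    ring
  -- Fourier coefficients of H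
  have coeffH : ∀ n : ℤ, fourierCoeff (⇑H) n = sinc' (Real.pi * (n - x)) := by
    intro n
    have h1 : fourierCoeff (⇑H) n
        = fourierCoeff (AddCircle.liftIoc (2 * Real.pi) (-Real.pi) h) n := by
      unfold fourierCoeff
      apply MeasureTheory.integral_congr_ae
      filter_upwards [hH.coeFn_toLp] with t ht
      rw [hHdef, ht]
    have h2 : (∫ φ in (-Real.pi)..Real.pi, Complex.exp (-(Complex.I * n * φ)) * h φ)
        = ∫ φ in (-Real.pi)..Real.pi, Complex.exp (Complex.I * ((x - n : ℝ) : ℂ) * φ) := by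
      apply intervalIntegral.integral_congr
      intro φ _
      simp only [hh]
      rw [← Complex.exp_add]
      congr 1
      push_cast
      ring
    rw [h1, fourierCoeff_liftIoc_pi, h2, exp_integral]
    rw [show Real.pi * (x - n) = -(Real.pi * (n - x)) by ring, sinc'_neg]
  -- inner product ⟪H, G⟫ = extFourier f x
  have hinner : (inner ℂ H G : ℂ) = extFourier f x := by
    rw [MeasureTheory.L2.inner_def]
    set q : AddCircle (2 * Real.pi) → ℂ :=
      fun t => (starRingEnd ℂ) (AddCircle.liftIoc (2 * Real.pi) (-Real.pi) h t) *
        (AddCircle.liftIoc (2 * Real.pi) (-Real.pi) f t) with hq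
    have h1 : (∫ t, (inner ℂ (H t) (G t) : ℂ) ∂AddCircle.haarAddCircle)
        = ∫ t, q t ∂AddCircle.haarAddCircle := by
      apply MeasureTheory.integral_congr_ae
      filter_upwards [hH.coeFn_toLp, hG.coeFn_toLp] with t e1 e2
      rw [RCLike.inner_apply, hHdef, hGdef, e1, e2, mul_comm]
    have hvol : (∫ t, q t ∂(volume : Measure (AddCircle (2 * Real.pi))))
        = (2 * Real.pi) • ∫ t, q t ∂AddCircle.haarAddCircle := by
      rw [AddCircle.volume_eq_smul_haarAddCircle, MeasureTheory.integral_smul_measure,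
        ENNReal.toReal_ofReal (by positivity)]
    have hIoc : (∫ t in Set.Ioc (-Real.pi) (-Real.pi + 2 * Real.pi), q ↑t)
        = ∫ t, q t ∂(volume : Measure (AddCircle (2 * Real.pi))) :=
      AddCircle.integral_preimage (2 * Real.pi) (-Real.pi) q
    have h3 : (∫ t in Set.Ioc (-Real.pi) (-Real.pi + 2 * Real.pi), q ↑t)
        = ∫ φ in (-Real.pi)..Real.pi, f φ * Complex.exp (-(Complex.I * φ * x)) := by
      rw [hb, intervalIntegral.integral_of_le (by linarith)]
      refine setIntegral_congr_fun measurableSet_Ioc fun φ hφ => ?_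
      have hmem : φ ∈ Set.Ioc (-Real.pi) (-Real.pi + 2 * Real.pi) := by rw [hb]; exact hφ
      rw [hq]
      simp only
      rw [AddCircle.liftIoc_coe_apply hmem, AddCircle.liftIoc_coe_apply hmem, hh]
      simp only
      rw [← Complex.exp_conj]
      rw [map_mul, map_mul, Complex.conj_I, Complex.conj_ofReal, Complex.conj_ofReal]
      rw [mul_comm]
      congr 1
      ring
    have h4 : (∫ t, q t ∂AddCircle.haarAddCircle)
        = ((2 * Real.pi : ℝ))⁻¹ • ∫ t in Set.Ioc (-Real.pi) (-Real.pi + 2 * Real.pi), q ↑t := by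
      rw [hIoc, hvol, ← smul_assoc, smul_eq_mul, inv_mul_cancel₀ (by positivity), one_smul]
    rw [h1, h4, h3, extFourier, Complex.real_smul]
    congr 1
    push_cast
    ring
  -- assemble
  have hsum := fourierBasis.hasSum_inner_mul_inner H G
  have heq : (fun n : ℤ => (inner ℂ H (fourierBasis n) : ℂ) * inner ℂ (fourierBasis n) G)
      = fun n : ℤ => extFourier f n * sinc' (Real.pi * (n - x)) := by
    funext n
    have e1 : (inner ℂ (fourierBasis n) G : ℂ) = extFourier f n := by
      rw [← fourierBasis.repr_apply_apply, fourierBasis_repr]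
      exact coeffG n
    have e2 : (inner ℂ H (fourierBasis n) : ℂ) = sinc' (Real.pi * (n - x)) := by
      rw [← inner_conj_symm, ← fourierBasis.repr_apply_apply, fourierBasis_repr, coeffH n,
        conj_sinc']
    rw [e1, e2, mul_comm]
  rw [heq, hinner] at hsum
  exact ⟨hsum.summable.norm, hsum⟩
end
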